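/- Let F be a field of characteristic zero and let L be the three-dimensional Heisenberg Lie algebra over F, with basis e_1, e_2, e_3 and multiplication [e_1, e_2] = e_3 (all other brackets of basis elements equal to zero). Then the linear operator Δ defined by Δ(x_1 e_1 + x_2 e_2 + x_3 e_3) = 2 x_2 e_2 + x_3 e_3 is a local derivation on L which is not a derivation. -/

import Mathlib

/-!
In coordinates the bracket is `⁅x, y⁆ = (x₁y₂ - x₂y₁) e₃`, so for all `a, c, d` the map
`e₁ ↦ a e₁ + c e₂, e₂ ↦ d e₂, e₃ ↦ (a + d) e₃` is a derivation. If `x₁ = 0` the derivation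
`diag(-1, 2, 1)` agrees with `Δ` at `x`; if `x₁ ≠ 0` the one with `a = 0, c = x₂ / x₁, d = 1` does.
On the other hand `Δ ⁅e₁, e₂⁆ = e₃` while `⁅Δ e₁, e₂⁆ + ⁅e₁, Δ e₂⁆ = 2 e₃`.
-/

section Heisenberg

variable {F L : Type*} [Field F] [LieRing L] [LieAlgebra F L] (b : Module.Basis (Fin 3) F L)

noncomputable def heisenbergDerivationMap (a c d : F) : L →ₗ[F] L where
  toFun x := (a * b.repr x 0) • b 0 + (c * b.repr x 0 + d * b.repr x 1) • b 1 +
      ((a + d) * b.repr x 2) • b 2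
  map_add' x y := by
    simp only [map_add, Finsupp.add_apply]
    module
  map_smul' t x := by
    simp only [map_smul, Finsupp.smul_apply, smul_eq_mul, RingHom.id_apply]
    module

lemma heisenbergDerivationMap_apply (a c d : F) (x : L) :
    heisenbergDerivationMap b a c d x = (a * b.repr x 0) • b 0 +
      (c * b.repr x 0 + d * b.repr x 1) • b 1 + ((a + d) * b.repr x 2) • b 2 :=
  rfl

lemma repr_heisenbergDerivationMap (a c d : F) (x : L) (i : Fin 3) :
    b.repr (heisenbergDerivationMap b a c d x) i =
      ![a * b.repr x 0, c * b.repr x 0 + d * b.repr x 1, (a + d) * b.repr x 2] i := by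
  fin_cases i <;> simp [heisenbergDerivationMap_apply]

lemma heisenbergDerivationMap_apply_two (a c d : F) :
    heisenbergDerivationMap b a c d (b 2) = (a + d) • b 2 := by
  simp [heisenbergDerivationMap_apply]

variable (h12 : ⁅b 0, b 1⁆ = b 2) (h13 : ⁅b 0, b 2⁆ = 0) (h23 : ⁅b 1, b 2⁆ = 0)
include h12 h13 h23

lemma heisenberg_lie_eq (x y : L) :
    ⁅x, y⁆ = (b.repr x 0 * b.repr y 1 - b.repr x 1 * b.repr y 0) • b 2 := by
  have h21 : ⁅b 1, b 0⁆ = -b 2 := by rw [← lie_skew, h12]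
  have h31 : ⁅b 2, b 0⁆ = 0 := by rw [← lie_skew, h13, neg_zero]
  have h32 : ⁅b 2, b 1⁆ = 0 := by rw [← lie_skew, h23, neg_zero]
  conv_lhs => rw [← b.sum_repr x, ← b.sum_repr y]
  simp only [Fin.sum_univ_three, add_lie, lie_add, smul_lie, lie_smul, h12, h13, h23,
    h21, h31, h32, lie_self, smul_zero, add_zero, zero_add, smul_neg]
  module

lemma heisenbergDerivationMap_lie (a c d : F) (x y : L) :
    heisenbergDerivationMap b a c d ⁅x, y⁆ =
      ⁅x, heisenbergDerivationMap b a c d y⁆ - ⁅y, heisenbergDerivationMap b a c d x⁆ := by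
  simp only [heisenberg_lie_eq b h12 h13 h23 x, heisenberg_lie_eq b h12 h13 h23 y, map_smul,
    heisenbergDerivationMap_apply_two, repr_heisenbergDerivationMap, Matrix.cons_val_zero,
    Matrix.cons_val_one]
  match_scalars
  ring

noncomputable def heisenbergDerivation (a c d : F) : LieDerivation F L L :=
  { heisenbergDerivationMap b a c d with
    leibniz' := heisenbergDerivationMap_lie b h12 h13 h23 a c d }

lemma heisenbergDerivation_apply (a c d : F) (x : L) :
    heisenbergDerivation b h12 h13 h23 a c d x = heisenbergDerivationMap b a c d x :=
  rfl

lemma exists_heisenbergDerivation_apply_eq (x : L) :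
    ∃ D : LieDerivation F L L, D x = (2 * b.repr x 1) • b 1 + b.repr x 2 • b 2 := by
  by_cases hx : b.repr x 0 = 0
  · refine ⟨heisenbergDerivation b h12 h13 h23 (-1) 0 2, ?_⟩
    rw [heisenbergDerivation_apply, heisenbergDerivationMap_apply, hx]
    module
  · refine ⟨heisenbergDerivation b h12 h13 h23 0 (b.repr x 1 / b.repr x 0) 1, ?_⟩
    rw [heisenbergDerivation_apply, heisenbergDerivationMap_apply, div_mul_cancel₀ _ hx]
    module

end Heisenberg

theorem heisenberg_local_derivation_not_derivation
    (F : Type*) [Field F]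
    (L : Type*) [LieRing L] [LieAlgebra F L]
    (b : Module.Basis (Fin 3) F L)
    (h12 : ⁅b 0, b 1⁆ = b 2)
    (h13 : ⁅b 0, b 2⁆ = 0)
    (h23 : ⁅b 1, b 2⁆ = 0)
    (Δ : L →ₗ[F] L)
    (hΔ : ∀ x : L, Δ x = (2 * b.repr x 1) • b 1 + (b.repr x 2) • b 2) :
    (∀ x : L, ∃ D : LieDerivation F L L, Δ x = D x) ∧
    ¬ (∀ x y : L, Δ ⁅x, y⁆ = ⁅Δ x, y⁆ + ⁅x, Δ y⁆) := by
  refine ⟨fun x => ?_, fun hΔ_lie => b.ne_zero 2 ?_⟩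
  · obtain ⟨D, hD⟩ := exists_heisenbergDerivation_apply_eq b h12 h13 h23 x
    exact ⟨D, (hΔ x).trans hD.symm⟩
  · have h : b 2 = (2 : F) • b 2 := by
      simpa [hΔ, h12] using hΔ_lie (b 0) (b 1)
    calc b 2 = (2 : F) • b 2 - b 2 := by module
      _ = 0 := by rw [← h, sub_self]
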